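/- Let f ∈ ℚ[x] with f(0) ≠ 0 have no multiple roots and suppose no root of f is a root of rational. If the Galois-like group G_f^B or G_f^ℚ is doubly transitive (as a permutation group on the roots), then the lattice R_f^ℚ is trivial; if the Galois-like group G_f is doubly transitive, then the lattice R_f is trivial. -/

import Mathlib

/-! If a lattice `R ⊆ ℤⁿ` of exponents is stable under a doubly transitive group `G` of
permutations of the roots and contains a non-constant `u`, choose `i` with `n uᵢ ≠ Σ u` and sum
the translates of `u` over the stabilizer of `i`. The result lies in `R`, is constant off `i`
(the stabilizer is transitive there) but not constant, so its `G`-translates give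
`d (e_k - e_l) ∈ R` for some `d ≠ 0`. Hence `r_k ^ (d n) / (∏ r) ^ d` is rational for every
`k`; as `∏ r = ± f(0) / lc f` is rational, so is `r_k ^ (d n)`, contradicting that `r_k` is not
a root of rational. Each Galois-like set preserves the corresponding lattice, and so does the
group it generates. -/

noncomputable section

open Polynomial

/-- `z` is a root of rational: some positive power of `z` is rational. -/
def IsRootOfRational (z : ℂ) : Prop := ∃ k : ℕ, 0 < k ∧ ∃ q : ℚ, z ^ k = (q : ℂ)

/-- `z` is a rational number (viewed in `ℂ`). -/
def IsRat (z : ℂ) : Prop := ∃ q : ℚ, z = (q : ℂ)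

/-- The Galois-like group `G_f`: permutations of the (indexed) roots preserving all
multiplicative relations. -/
def GaloisLike {ι : Type*} [Fintype ι] (r : ι → ℂ) : Set (Equiv.Perm ι) :=
  {σ | ∀ v : ι → ℤ, (∏ i, r i ^ v i) = 1 → (∏ i, r (σ i) ^ v i) = 1}

/-- The Galois-like group `G_f^B`. -/
def GaloisLikeB {ι : Type*} [Fintype ι] (r : ι → ℂ) : Set (Equiv.Perm ι) :=
  {σ | ∀ v : ι → ℤ, IsRat (∏ i, r i ^ v i) → (∏ i, r (σ i) ^ v i) = ∏ i, r i ^ v i}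

/-- The Galois-like group `G_f^ℚ`. -/
def GaloisLikeQ {ι : Type*} [Fintype ι] (r : ι → ℂ) : Set (Equiv.Perm ι) :=
  {σ | ∀ v : ι → ℤ, IsRat (∏ i, r i ^ v i) → IsRat (∏ i, r (σ i) ^ v i)}

/-- The exponent lattice of the vector `w` is trivial. -/
def VecLatticeTrivial {ι : Type*} [Fintype ι] (w : ι → ℂ) : Prop :=
  ∀ u : ι → ℤ, (∏ i, w i ^ u i) = 1 → ∀ i j : ι, u i = u j

/-- The lattice `R_w^ℚ` of the vector `w` is trivial. -/
def VecLatticeQTrivial {ι : Type*} [Fintype ι] (w : ι → ℂ) : Prop :=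
  ∀ u : ι → ℤ, IsRat (∏ i, w i ^ u i) → ∀ i j : ι, u i = u j

/-- A subset `M ⊆ ℚ[G/H]` is ℚ-admissible: there is `μ ∈ ℚ[G]` with stabilizer
(under left multiplication) exactly `H` such that `mμ = 0` for all `m ∈ M`
(here `Σ_{g∈G} m(ḡ) • gμ = |H| ⋅ (mμ)`, so we express `mμ = 0` this way). -/
def IsQAdmissible {G : Type*} [Group G] (H : Subgroup G) (M : Set ((G ⧸ H) →₀ ℚ)) : Prop :=
  ∃ μ : MonoidAlgebra ℚ G,
    (∀ g : G, MonoidAlgebra.single g (1 : ℚ) * μ = μ ↔ g ∈ H) ∧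
    ∀ m ∈ M, (∑ᶠ g : G, m (QuotientGroup.mk g) • (MonoidAlgebra.single g (1 : ℚ) * μ)) = 0

/-- A ℚ-subspace of `ℚ[G/H]` is a `ℚ[G]`-submodule iff it is stable under the
permutation action of `G` on `G/H`. -/
def IsGStable {G : Type*} [Group G] (H : Subgroup G) (M : Submodule ℚ ((G ⧸ H) →₀ ℚ)) : Prop :=
  ∀ g : G, ∀ m ∈ M, Finsupp.mapDomain (fun x : G ⧸ H => g • x) m ∈ M

/-- The pair `(G,H)` is ℚ-trivial: the only ℚ-admissible `ℚ[G]`-submodules of `ℚ[G/H]`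
are `0` and `V₁` (the line of constant coefficient vectors). -/
def QTrivialPair {G : Type*} [Group G] (H : Subgroup G) : Prop :=
  ∀ M : Submodule ℚ ((G ⧸ H) →₀ ℚ), IsGStable H M →
    IsQAdmissible H (M : Set ((G ⧸ H) →₀ ℚ)) →
    M = ⊥ ∨ (M : Set ((G ⧸ H) →₀ ℚ)) = {m | ∃ a : ℚ, ∀ x, m x = a}

/-- The action of `G` on `G/H` is transitive. -/
def PairTransitive {G : Type*} [Group G] (H : Subgroup G) : Prop :=
  ∀ x y : G ⧸ H, ∃ g : G, g • x = y

/-- The action of `G` on `G/H` is doubly transitive. -/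
def PairDoublyTransitive {G : Type*} [Group G] (H : Subgroup G) : Prop :=
  ∀ x₁ x₂ y₁ y₂ : G ⧸ H, x₁ ≠ x₂ → y₁ ≠ y₂ → ∃ g : G, g • x₁ = y₁ ∧ g • x₂ = y₂

/-- The action of `G` on `G/H` is doubly homogeneous. -/
def PairDoublyHomogeneous {G : Type*} [Group G] (H : Subgroup G) : Prop :=
  ∀ x₁ x₂ y₁ y₂ : G ⧸ H, x₁ ≠ x₂ → y₁ ≠ y₂ →
    ∃ g : G, ({g • x₁, g • x₂} : Set (G ⧸ H)) = {y₁, y₂}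

/-- A set of permutations of `ι` acts transitively. -/
def SetTransitive {ι : Type*} (S : Set (Equiv.Perm ι)) : Prop :=
  ∀ i j : ι, ∃ σ ∈ S, σ i = j

/-- A set of permutations of `ι` acts doubly transitively. -/
def SetDoublyTransitive {ι : Type*} (S : Set (Equiv.Perm ι)) : Prop :=
  ∀ i j k l : ι, i ≠ j → k ≠ l → ∃ σ ∈ S, σ i = k ∧ σ j = l

/-- A set of permutations of `ι` acts doubly homogeneously. -/
def SetDoublyHomogeneous {ι : Type*} (S : Set (Equiv.Perm ι)) : Prop :=
  ∀ i j k l : ι, i ≠ j → k ≠ l → ∃ σ ∈ S, ({σ i, σ j} : Set ι) = {k, l}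

open Equiv

section Symmetrize

variable {ι : Type*} (H : Subgroup (Perm ι)) [Fintype H] (u : ι → ℤ)

def symmetrize : ι → ℤ := ∑ σ : H, u ∘ (σ : Perm ι).symm

lemma symmetrize_apply (j : ι) : symmetrize H u j = ∑ σ : H, u ((σ : Perm ι).symm j) := by
  simp only [symmetrize, Finset.sum_apply, Function.comp_apply]

lemma symmetrize_mem {R : AddSubgroup (ι → ℤ)} (hR : ∀ σ ∈ H, ∀ v ∈ R, v ∘ σ.symm ∈ R)
    (hu : u ∈ R) : symmetrize H u ∈ R :=
  sum_mem fun σ _ => hR σ σ.2 u hu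

lemma symmetrize_apply_of_mem {τ : Perm ι} (hτ : τ ∈ H) (j : ι) :
    symmetrize H u (τ j) = symmetrize H u j := by
  simp only [symmetrize_apply]
  exact Fintype.sum_equiv (Equiv.mulLeft ⟨τ, hτ⟩⁻¹) _ _ fun σ => by
    simp [Perm.mul_def, Perm.inv_def]

lemma symmetrize_apply_of_fixed {i : ι} (hi : ∀ σ ∈ H, σ i = i) :
    symmetrize H u i = Fintype.card H • u i := by
  rw [symmetrize_apply, Finset.card_univ.symm, ← Finset.sum_const]
  refine Finset.sum_congr rfl fun σ _ => ?_
  rw [(Equiv.symm_apply_eq _).mpr (hi σ σ.2).symm]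

lemma sum_symmetrize [Fintype ι] : ∑ j, symmetrize H u j = Fintype.card H • ∑ j, u j := by
  simp only [symmetrize_apply]
  rw [Finset.sum_comm, ← Finset.card_univ, ← Finset.sum_const]
  exact Finset.sum_congr rfl fun σ _ => Equiv.sum_comp (σ : Perm ι).symm u

end Symmetrize

section DoublyTransitive

variable {ι : Type*}

lemma SetDoublyTransitive.mono {S T : Set (Perm ι)} (hST : S ⊆ T) (hS : SetDoublyTransitive S) :
    SetDoublyTransitive T := fun i j k l hij hkl =>
  (hS i j k l hij hkl).imp fun _ ⟨hσ, h⟩ => ⟨hST hσ, h⟩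

variable [Fintype ι]

lemma comp_symm_mem_of_mem_closure {S : Set (Perm ι)} {R : AddSubgroup (ι → ℤ)}
    (hS : ∀ σ ∈ S, ∀ v ∈ R, v ∘ σ.symm ∈ R) {σ : Perm ι} (hσ : σ ∈ Subgroup.closure S) :
    ∀ v ∈ R, v ∘ σ.symm ∈ R := by
  rw [← Subgroup.mem_toSubmonoid, Subgroup.closure_toSubmonoid_of_finite] at hσ
  induction hσ using Submonoid.closure_induction with
  | mem σ hσ => exact hS σ hσ
  | one => exact fun v hv => hv
  | mul σ τ _ _ hσ hτ => exact fun v hv => hσ _ (hτ v hv)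

lemma exists_card_smul_ne_sum {u : ι → ℤ} {i j : ι} (hij : u i ≠ u j) :
    ∃ k, Fintype.card ι • u k ≠ ∑ l, u l := by
  by_contra! h
  have hcard : Fintype.card ι ≠ 0 := (Fintype.card_pos_iff.mpr ⟨i⟩).ne'
  exact hij (nsmul_right_injective hcard ((h i).trans (h j).symm))

variable [DecidableEq ι]

lemma exists_smul_single_sub_single_mem {G : Subgroup (Perm ι)}
    (hG : SetDoublyTransitive (G : Set (Perm ι))) {R : AddSubgroup (ι → ℤ)}
    (hR : ∀ σ ∈ G, ∀ v ∈ R, v ∘ σ.symm ∈ R) {u : ι → ℤ} (hu : u ∈ R) {i₀ j₀ : ι}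
    (hne : u i₀ ≠ u j₀) :
    ∃ d : ℤ, d ≠ 0 ∧ ∀ k l, d • (Pi.single k 1 - Pi.single l 1 : ι → ℤ) ∈ R := by
  classical
  obtain ⟨i, hi⟩ := exists_card_smul_ne_sum hne
  obtain ⟨j, hji⟩ : ∃ j, j ≠ i := by
    by_cases h : i₀ = i
    · exact ⟨j₀, fun h' => hne (by rw [h, h'])⟩
    · exact ⟨i₀, h⟩
  set H := G ⊓ MulAction.stabilizer (Perm ι) i
  set A := symmetrize H u
  have hHi : ∀ σ ∈ H, σ i = i := fun σ hσ => hσ.2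
  have hA_const : ∀ m ≠ i, A m = A j := fun m hm => by
    obtain ⟨τ, hτ, hτi, hτj⟩ := hG i j i m hji.symm hm.symm
    rw [← hτj]
    exact symmetrize_apply_of_mem H u ⟨hτ, hτi⟩ j
  set d := A i - A j
  refine ⟨d, fun hd => hi ?_, fun k l => ?_⟩
  -- if `A` were constant, `n • (|H| • u i) = ∑ A = |H| • ∑ u`
  · have hcardH : Fintype.card H ≠ 0 := Fintype.card_ne_zero
    refine nsmul_right_injective hcardH ?_
    have hA : ∀ m, A m = Fintype.card H • u i := fun m => by
      rw [← symmetrize_apply_of_fixed H u hHi]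
      rcases eq_or_ne m i with rfl | hm
      · rfl
      · exact (hA_const m hm).trans (sub_eq_zero.mp hd).symm
    change Fintype.card H • (Fintype.card ι • u i) = Fintype.card H • ∑ l, u l
    rw [← sum_symmetrize, Finset.sum_congr rfl fun m _ => hA m, Finset.sum_const,
      Finset.card_univ, smul_comm]
  · have hshift : ∀ τ ∈ G, A ∘ τ.symm = (fun _ => A j) + d • Pi.single (τ i) 1 := by
      intro τ hτ
      ext m
      rcases eq_or_ne m (τ i) with rfl | hm
      · simp [d]
      · have : τ.symm m ≠ i := fun h => hm (by rw [← h, Equiv.apply_symm_apply])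
        simp [hA_const _ this, hm]
    rcases eq_or_ne k l with rfl | hkl
    · simp
    obtain ⟨τ, hτ, hτi, -⟩ := hG i j k l hji.symm hkl
    obtain ⟨ρ, hρ, hρi, -⟩ := hG i j l k hji.symm hkl.symm
    have hmem := sub_mem (hR τ hτ A (symmetrize_mem H u (fun σ hσ => hR σ hσ.1) hu))
      (hR ρ hρ A (symmetrize_mem H u (fun σ hσ => hR σ hσ.1) hu))
    rwa [hshift τ hτ, hshift ρ hρ, hτi, hρi, add_sub_add_left_eq_sub, ← smul_sub] at hmem

end DoublyTransitive

section ExponentLattice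

variable {ι : Type*} [Fintype ι] {F : Type*} [Field F] (r : ι → F)

def zpowProd (u : ι → ℤ) : F := ∏ i, r i ^ u i

lemma zpowProd_add {r : ι → F} (hr : ∀ i, r i ≠ 0) (u v : ι → ℤ) :
    zpowProd r (u + v) = zpowProd r u * zpowProd r v := by
  simp only [zpowProd, Pi.add_apply, zpow_add₀ (hr _), Finset.prod_mul_distrib]

lemma zpowProd_neg (u : ι → ℤ) : zpowProd r (-u) = (zpowProd r u)⁻¹ := by
  simp only [zpowProd, Pi.neg_apply, zpow_neg, Finset.prod_inv_distrib]

lemma zpowProd_zsmul (d : ℤ) (u : ι → ℤ) : zpowProd r (d • u) = zpowProd r u ^ d := by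
  simp only [zpowProd, Pi.smul_apply, smul_eq_mul, mul_comm d, zpow_mul, Finset.prod_zpow]

lemma zpowProd_single [DecidableEq ι] (k : ι) : zpowProd r (Pi.single k 1) = r k := by
  rw [zpowProd, Finset.prod_eq_single k (fun l _ hl => by simp [hl]) (by simp)]
  simp

lemma zpowProd_comp_symm (σ : Perm ι) (u : ι → ℤ) :
    zpowProd r (u ∘ σ.symm) = ∏ i, r (σ i) ^ u i :=
  (Equiv.prod_comp σ _).symm.trans (by simp)

lemma zpowProd_smul_single_sub_single [DecidableEq ι] {r : ι → F} (hr : ∀ i, r i ≠ 0)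
    (d : ℤ) (k l : ι) :
    zpowProd r (d • (Pi.single k 1 - Pi.single l 1)) = r k ^ d / r l ^ d := by
  rw [zpowProd_zsmul, sub_eq_add_neg, zpowProd_add hr, zpowProd_neg, zpowProd_single,
    zpowProd_single, ← div_eq_mul_inv, div_zpow]

def expLattice {r : ι → F} (hr : ∀ i, r i ≠ 0) : AddSubgroup (ι → ℤ) where
  carrier := {u | zpowProd r u = 1}
  zero_mem' := by simp [zpowProd]
  add_mem' {u v} hu hv := by simp_all [zpowProd_add hr]
  neg_mem' {u} hu := by simp_all [zpowProd_neg]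

def expLatticeIn (K : Subfield F) {r : ι → F} (hr : ∀ i, r i ≠ 0) : AddSubgroup (ι → ℤ) where
  carrier := {u | zpowProd r u ∈ K}
  zero_mem' := by simp [zpowProd, one_mem]
  add_mem' {u v} hu hv := by
    change zpowProd r (u + v) ∈ K
    rw [zpowProd_add hr]
    exact mul_mem hu hv
  neg_mem' {u} hu := by
    change zpowProd r (-u) ∈ K
    rw [zpowProd_neg]
    exact inv_mem hu

lemma mem_expLattice {r : ι → F} (hr : ∀ i, r i ≠ 0) {u : ι → ℤ} :
    u ∈ expLattice hr ↔ zpowProd r u = 1 := Iff.rfl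

lemma mem_expLatticeIn (K : Subfield F) {r : ι → F} (hr : ∀ i, r i ≠ 0) {u : ι → ℤ} :
    u ∈ expLatticeIn K hr ↔ zpowProd r u ∈ K := Iff.rfl

theorem eq_of_mem_of_setDoublyTransitive (K : Subfield F) {r : ι → F} (hr : ∀ i, r i ≠ 0)
    (hprod : ∏ i, r i ∈ K) (hroot : ∀ i (m : ℤ), r i ^ m ∈ K → m = 0)
    {R : AddSubgroup (ι → ℤ)} (hRK : ∀ u ∈ R, zpowProd r u ∈ K) {S : Set (Perm ι)}
    (hS : ∀ σ ∈ S, ∀ v ∈ R, v ∘ σ.symm ∈ R) (hdt : SetDoublyTransitive S)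
    {u : ι → ℤ} (hu : u ∈ R) (i j : ι) : u i = u j := by
  classical
  by_contra hne
  obtain ⟨d, hd, hmem⟩ := exists_smul_single_sub_single_mem
    (hdt.mono (Subgroup.subset_closure (k := S))) (fun σ hσ => comp_symm_mem_of_mem_closure hS hσ)
    hu hne
  have hquot : ∀ l, r i ^ d / r l ^ d ∈ K := fun l => by
    rw [← zpowProd_smul_single_sub_single hr]
    exact hRK _ (hmem i l)
  have hpow : r i ^ (d * Fintype.card ι) ∈ K := by
    have h := mul_mem (prod_mem (t := Finset.univ) fun l _ => hquot l) (zpow_mem hprod d)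
    rwa [Finset.prod_div_distrib, Finset.prod_const, Finset.card_univ, Finset.prod_zpow,
      div_mul_cancel₀ _ (zpow_ne_zero _ (Finset.prod_ne_zero_iff.mpr fun l _ => hr l)),
      ← zpow_natCast, ← zpow_mul] at h
  have hcard : (Fintype.card ι : ℤ) ≠ 0 := Nat.cast_ne_zero.mpr (Fintype.card_pos_iff.mpr ⟨i⟩).ne'
  exact mul_ne_zero hd hcard (hroot i _ hpow)

end ExponentLattice

section Polynomial

variable {K L : Type*} [Field K] [Field L] [Algebra K L] {f : K[X]}

lemma ne_zero_of_aeval_eq_zero (hf0 : f.eval 0 ≠ 0) {z : L} (hz : aeval z f = 0) : z ≠ 0 := by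
  rintro rfl
  rw [← coeff_zero_eq_aeval_zero', coeff_zero_eq_eval_zero, map_eq_zero] at hz
  exact hf0 hz

lemma prod_mem_fieldRange_of_roots [IsAlgClosed L] (hf : f ≠ 0) {ι : Type*} [Fintype ι]
    (hcard : Fintype.card ι = f.natDegree) {r : ι → L} (hinj : Function.Injective r)
    (hroot : ∀ i, aeval (r i) f = 0) : ∏ i, r i ∈ (algebraMap K L).fieldRange := by
  set F := f.map (algebraMap K L)
  have hle : Finset.univ.val.map r ≤ F.roots := by
    refine (Multiset.le_iff_subset (Finset.univ.nodup.map hinj)).mpr fun z hz => ?_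
    obtain ⟨i, -, rfl⟩ := Multiset.mem_map.mp hz
    exact mem_aroots.mpr ⟨hf, hroot i⟩
  have hroots : F.roots = Finset.univ.val.map r :=
    (Multiset.eq_of_le_of_card_le hle (by
      rw [IsAlgClosed.card_roots_map_eq_natDegree_of_injective f (algebraMap K L).injective,
        Multiset.card_map, Finset.card_val, Finset.card_univ, hcard])).symm
  have hcoeff := (IsAlgClosed.splits F).coeff_zero_eq_leadingCoeff_mul_prod_roots
  rw [hroots, Finset.prod_map_val, coeff_map, leadingCoeff_map, natDegree_map] at hcoeff
  have hlc : (-1) ^ f.natDegree * algebraMap K L f.leadingCoeff ≠ 0 := by simp [hf]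
  refine ⟨f.coeff 0 / ((-1) ^ f.natDegree * f.leadingCoeff), ?_⟩
  rw [map_div₀, map_mul, map_pow, map_neg, map_one, div_eq_iff hlc, hcoeff, mul_comm]

end Polynomial

lemma isRat_iff_mem_fieldRange {z : ℂ} : IsRat z ↔ z ∈ (algebraMap ℚ ℂ).fieldRange := by
  simp [IsRat, eq_comm]

lemma galoisLikeB_subset_galoisLikeQ {ι : Type*} [Fintype ι] (r : ι → ℂ) :
    GaloisLikeB r ⊆ GaloisLikeQ r := fun σ hσ v hv => by rwa [hσ v hv]

lemma isRootOfRational_of_isRat_zpow {z : ℂ} {m : ℤ} (hm : m ≠ 0) (h : IsRat (z ^ m)) :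
    IsRootOfRational z := by
  obtain ⟨q, hq⟩ := h
  obtain ⟨k, rfl | rfl⟩ := Int.eq_nat_or_neg m
  · exact ⟨k, by omega, q, by rwa [zpow_natCast] at hq⟩
  · exact ⟨k, by omega, q⁻¹, by rw [Rat.cast_inv, ← hq, zpow_neg, inv_inv, zpow_natCast]⟩

theorem statement12_general (f : Polynomial ℚ) (hf0 : f.eval 0 ≠ 0) (n : ℕ) (hn : n = f.natDegree)
    (r : Fin n → ℂ) (hinj : Function.Injective r)
    (hroot : ∀ i, Polynomial.aeval (r i) f = 0)
    (hnr : ∀ i, ¬ IsRootOfRational (r i)) :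
    ((SetDoublyTransitive (GaloisLikeB r) ∨ SetDoublyTransitive (GaloisLikeQ r)) →
      VecLatticeQTrivial r) ∧
    (SetDoublyTransitive (GaloisLike r) → VecLatticeTrivial r) := by
  have hr : ∀ i, r i ≠ 0 := fun i => ne_zero_of_aeval_eq_zero hf0 (hroot i)
  have hprod : ∏ i, r i ∈ (algebraMap ℚ ℂ).fieldRange :=
    prod_mem_fieldRange_of_roots (fun h => hf0 (by simp [h])) (by simp [hn]) hinj hroot
  have hpow : ∀ i (m : ℤ), r i ^ m ∈ (algebraMap ℚ ℂ).fieldRange → m = 0 := fun i m h => by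
    by_contra hm
    exact hnr i (isRootOfRational_of_isRat_zpow hm (isRat_iff_mem_fieldRange.mpr h))
  refine ⟨fun hS u hu => ?_, fun hS u hu => ?_⟩
  · refine eq_of_mem_of_setDoublyTransitive _ hr hprod hpow
      (R := expLatticeIn (algebraMap ℚ ℂ).fieldRange hr) (fun _ hv => hv) (fun σ hσ v hv => ?_)
      (hS.elim (·.mono (galoisLikeB_subset_galoisLikeQ r)) id)
      ((mem_expLatticeIn _ hr).mpr (isRat_iff_mem_fieldRange.mp hu))
    rw [mem_expLatticeIn, zpowProd_comp_symm]
    exact isRat_iff_mem_fieldRange.mp (hσ v (isRat_iff_mem_fieldRange.mpr hv))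
  · refine eq_of_mem_of_setDoublyTransitive _ hr hprod hpow (R := expLattice hr)
      (fun v hv => ?_) (fun σ hσ v hv => ?_) hS hu
    · rw [(mem_expLattice hr).mp hv]
      exact one_mem _
    · rw [mem_expLattice, zpowProd_comp_symm]
      exact hσ v hv

/-- Let `f ∈ ℚ[x]` with `f(0) ≠ 0` have no multiple roots and suppose
no root of `f` is a root of rational. If `G_f^B` or `G_f^ℚ` is doubly transitive on the
roots, then `R_f^ℚ` is trivial; if `G_f` is doubly transitive, then `R_f` is trivial. -/
theorem statement12 (f : Polynomial ℚ) (hf0 : f.eval 0 ≠ 0) (n : ℕ) (hn : n = f.natDegree)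
    (r : Fin n → ℂ) (hinj : Function.Injective r)
    (hroot : ∀ i, Polynomial.aeval (r i) f = 0)
    (hall : ∀ z : ℂ, Polynomial.aeval z f = 0 → ∃ i, r i = z)
    (hnr : ∀ i, ¬ IsRootOfRational (r i)) :
    ((SetDoublyTransitive (GaloisLikeB r) ∨ SetDoublyTransitive (GaloisLikeQ r)) →
      VecLatticeQTrivial r) ∧
    (SetDoublyTransitive (GaloisLike r) → VecLatticeTrivial r) :=
  statement12_general f hf0 n hn r hinj hroot hnr

end
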